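/- arXiv:2008.03302 — 2 statements merged into one kernel-verified Lean document; each statement's English description precedes it below -/
import Mathlib

section
/- For a qubit and the three projective measurements y_0 = σ_Z, y_1 = sin(2θ)σ_X + cos(2θ)σ_Z, y_2 = sin(2θ)σ_X − cos(2θ)σ_Z with θ = π/6, every qubit state ρ satisfies P(y_0) + P(y_1) + P(y_2) ≤ 5/2, where P(y) = max_b p(b|y,ρ) is the larger of the two outcome probabilities of measuring y on ρ. -/
/-- Qubit uncertainty relation: for the measurements with Bloch vectors
`n₀ = e_z`, `n₁ = sin(2θ)e_x + cos(2θ)e_z`, `n₂ = sin(2θ)e_x − cos(2θ)e_z` at `θ = π/6`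
(so `2θ = π/3`), every qubit state, i.e. every Bloch vector `r` with `|r| ≤ 1`,
satisfies `P(y₀) + P(y₁) + P(y₂) ≤ 5/2` where `P(y) = (1 + |n·r|)/2`. -/
theorem qubit_uncertainty_bound (r : Fin 3 → ℝ)
    (hr : r 0 ^ 2 + r 1 ^ 2 + r 2 ^ 2 ≤ 1) :
    (1 + |r 2|) / 2
      + (1 + |Real.sin (Real.pi / 3) * r 0 + Real.cos (Real.pi / 3) * r 2|) / 2
      + (1 + |Real.sin (Real.pi / 3) * r 0 - Real.cos (Real.pi / 3) * r 2|) / 2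
    ≤ 5 / 2 := by
  rw [Real.sin_pi_div_three, Real.cos_pi_div_three]
  have h3 : Real.sqrt 3 ^ 2 = 3 := Real.sq_sqrt (by norm_num)
  have h1 : r 1 ^ 2 ≥ 0 := sq_nonneg _
  rcases abs_cases (r 2) with ⟨e0, _⟩ | ⟨e0, _⟩ <;>
    rcases abs_cases (Real.sqrt 3 / 2 * r 0 + 1 / 2 * r 2) with ⟨e1, _⟩ | ⟨e1, _⟩ <;>
    rcases abs_cases (Real.sqrt 3 / 2 * r 0 - 1 / 2 * r 2) with ⟨e2, _⟩ | ⟨e2, _⟩ <;>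
    rw [e0, e1, e2] <;>
    nlinarith [sq_nonneg (Real.sqrt 3 * r 2 - r 0), sq_nonneg (Real.sqrt 3 * r 2 + r 0),
      sq_nonneg (r 0), sq_nonneg (r 2), Real.sqrt_nonneg 3]
end

section
/- There exist a two-qubit state and projective measurements achieving the value 2 + √2 for the Bell expression P(a_1=b_1)+P(a_1=b_2)+P(a_2=b_1)+P(a_2≠b_2), and no quantum strategy exceeds 2 + √2 (this is the CHSH probability form of Tsirelson's bound). -/
open Matrix
open scoped ComplexOrder

noncomputable def kron {m n : ℕ} (A : Matrix (Fin m) (Fin m) ℂ)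
    (B : Matrix (Fin n) (Fin n) ℂ) : Matrix (Fin m × Fin n) (Fin m × Fin n) ℂ :=
  fun p q => A p.1 q.1 * B p.2 q.2

def IsProjection {m : ℕ} (P : Matrix (Fin m) (Fin m) ℂ) : Prop :=
  P.IsHermitian ∧ P * P = P

/-- The Bell expression `P(a₁=b₁) + P(a₁=b₂) + P(a₂=b₁) + P(a₂≠b₂)` for the quantum
strategy given by state `ρ` and projective measurements `{A x, 1 − A x}`,
`{B y, 1 − B y}`; `P(a,b|x,y) = Tr[ρ (A_a^x ⊗ B_b^y)]`. -/
noncomputable def bellExpr {m n : ℕ} (ρ : Matrix (Fin m × Fin n) (Fin m × Fin n) ℂ)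
    (A : Fin 2 → Matrix (Fin m) (Fin m) ℂ) (B : Fin 2 → Matrix (Fin n) (Fin n) ℂ) : ℝ :=
  (Matrix.trace (ρ * (kron (A 0) (B 0) + kron (1 - A 0) (1 - B 0)))).re
  + (Matrix.trace (ρ * (kron (A 0) (B 1) + kron (1 - A 0) (1 - B 1)))).re
  + (Matrix.trace (ρ * (kron (A 1) (B 0) + kron (1 - A 1) (1 - B 0)))).re
  + (Matrix.trace (ρ * (kron (A 1) (1 - B 1) + kron (1 - A 1) (B 1)))).re

/-!
With `a x = 2 A x - 1` and `b y = 2 B y - 1` (`±1`-valued observables), the Bell expression is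
`2 + ⟨C⟩ / 2` for the CHSH operator `C = a₀ b₀ + a₀ b₁ + a₁ b₀ - a₁ b₁`. Whenever
`a x² = b y² = 1` and every `a x` commutes with every `b y`,
`2√2 C = 8 - (√2 a₀ - (b₀ + b₁))² - (√2 a₁ - (b₀ - b₁))²`,
so `⟨C⟩ ≤ 2√2` in every state. Equality holds in the maximally entangled two-qubit state, in
which the reflections `a(θ)` of the real plane have correlations `⟨a(θ) ⊗ a(φ)⟩ = cos (θ - φ)`;
take angles `0, π/2` for Alice and `±π/4` for Bob.
-/

open scoped Kronecker

section CHSH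

variable {R : Type*} [Ring R]

def chsh (a b : Fin 2 → R) : R :=
  a 0 * b 0 + a 0 * b 1 + a 1 * b 0 - a 1 * b 1

def bellOperator (p q : Fin 2 → R) : R :=
  p 0 * q 0 + (1 - p 0) * (1 - q 0) + (p 0 * q 1 + (1 - p 0) * (1 - q 1))
    + (p 1 * q 0 + (1 - p 1) * (1 - q 0)) + (p 1 * (1 - q 1) + (1 - p 1) * q 1)

theorem two_mul_bellOperator (p q : Fin 2 → R) :
    2 * bellOperator p q = 4 + chsh (fun x ↦ 2 * p x - 1) (fun y ↦ 2 * q y - 1) := by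
  -- `noncomm_ring` normalizes numerals only as coefficients, not as standalone terms
  rw [← mul_one (4 : R)]
  simp only [bellOperator, chsh]
  noncomm_ring

theorem chsh_sum_of_squares [Algebra ℝ R] {a b : Fin 2 → R} (ha : ∀ x, a x * a x = 1)
    (hb : ∀ y, b y * b y = 1) (hab : ∀ x y, Commute (a x) (b y)) :
    (√2 • a 0 - (b 0 + b 1)) * (√2 • a 0 - (b 0 + b 1))
      + (√2 • a 1 - (b 0 - b 1)) * (√2 • a 1 - (b 0 - b 1))
      = 8 - (2 * √2) • chsh a b := by
  rw [show (8 : R) = (8 : ℝ) • 1 by rw [Algebra.smul_def, mul_one, map_ofNat]]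
  simp only [chsh, sub_mul, mul_sub, add_mul, mul_add, smul_mul_assoc, mul_smul_comm,
    ha, hb, (hab _ _).eq]
  match_scalars <;> ring_nf
  norm_num

end CHSH

namespace Matrix

section Kronecker

variable {R ι κ : Type*} [CommRing R]

theorem sub_kronecker (A B : Matrix ι ι R) (C : Matrix κ κ R) :
    (A - B) ⊗ₖ C = A ⊗ₖ C - B ⊗ₖ C := by
  ext; simp [sub_mul]

theorem kronecker_sub (A : Matrix ι ι R) (B C : Matrix κ κ R) :
    A ⊗ₖ (B - C) = A ⊗ₖ B - A ⊗ₖ C := by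
  ext; simp [mul_sub]

variable [Fintype ι] [DecidableEq ι] [Fintype κ] [DecidableEq κ]

theorem kronecker_one_mul_one_kronecker (A : Matrix ι ι R) (B : Matrix κ κ R) :
    (A ⊗ₖ 1) * (1 ⊗ₖ B) = A ⊗ₖ B := by
  rw [← mul_kronecker_mul, Matrix.mul_one, Matrix.one_mul]

theorem commute_kronecker_one_one_kronecker (A : Matrix ι ι R) (B : Matrix κ κ R) :
    Commute (A ⊗ₖ 1) (1 ⊗ₖ B) := by
  rw [Commute, SemiconjBy, kronecker_one_mul_one_kronecker, ← mul_kronecker_mul,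
    Matrix.mul_one, Matrix.one_mul]

theorem two_mul_sub_one_kronecker_one (A : Matrix ι ι R) :
    (2 * A - 1) ⊗ₖ (1 : Matrix κ κ R) = 2 * (A ⊗ₖ 1) - 1 := by
  rw [sub_kronecker, one_kronecker_one, two_mul, two_mul, add_kronecker]

theorem one_kronecker_two_mul_sub_one (B : Matrix κ κ R) :
    (1 : Matrix ι ι R) ⊗ₖ (2 * B - 1) = 2 * (1 ⊗ₖ B) - 1 := by
  rw [kronecker_sub, one_kronecker_one, two_mul, two_mul, kronecker_add]

theorem trace_mul_ofNat_mul (M X : Matrix ι ι R) (n : ℕ) [n.AtLeastTwo] :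
    (M * (ofNat(n) * X)).trace = ofNat(n) * (M * X).trace := by
  rw [← Nat.ofNat_nsmul_eq_mul, Matrix.mul_smul, trace_smul, Nat.ofNat_nsmul_eq_mul]

theorem trace_mul_ofNat (M : Matrix ι ι R) (n : ℕ) [n.AtLeastTwo] :
    (M * ofNat(n)).trace = ofNat(n) * M.trace := by
  simpa using trace_mul_ofNat_mul M 1 n

end Kronecker

section Observable

variable {ι κ : Type*} [Fintype ι] [Fintype κ]

theorem PosSemidef.re_trace_mul_mul_self_nonneg {ρ X : Matrix ι ι ℂ} (hρ : ρ.PosSemidef)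
    (hX : X.IsHermitian) : 0 ≤ (ρ * (X * X)).trace.re := by
  have h : 0 ≤ (X * ρ * Xᴴ).trace := (hρ.mul_mul_conjTranspose_same X).trace_nonneg
  rw [hX.eq, trace_mul_cycle, trace_mul_comm] at h
  exact (Complex.nonneg_iff.mp h).1

variable [DecidableEq ι] [DecidableEq κ]

def IsBinaryObservable (a : Matrix ι ι ℂ) : Prop :=
  a.IsHermitian ∧ a * a = 1

theorem isBinaryObservable_two_mul_sub_one {P : Matrix ι ι ℂ} (hP : P.IsHermitian)
    (hPP : P * P = P) : (2 * P - 1).IsBinaryObservable := by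
  refine ⟨two_mul P ▸ (hP.add hP).sub isHermitian_one, ?_⟩
  have h : (2 * P - 1) * (2 * P - 1) = 1 + 4 * (P * P - P) := by noncomm_ring
  rw [h, hPP, sub_self, mul_zero, add_zero]

theorem two_mul_inv_two_smul_one_add_sub_one (a : Matrix ι ι ℂ) :
    2 * ((2⁻¹ : ℝ) • (1 + a)) - 1 = a := by
  rw [two_mul]
  module

theorem IsBinaryObservable.kronecker_one {a : Matrix ι ι ℂ} (ha : a.IsBinaryObservable) :
    (a ⊗ₖ (1 : Matrix κ κ ℂ)).IsBinaryObservable :=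
  ⟨by rw [IsHermitian, conjTranspose_kronecker, ha.1.eq, conjTranspose_one],
    by rw [← mul_kronecker_mul, ha.2, Matrix.one_mul, one_kronecker_one]⟩

theorem IsBinaryObservable.one_kronecker {b : Matrix κ κ ℂ} (hb : b.IsBinaryObservable) :
    ((1 : Matrix ι ι ℂ) ⊗ₖ b).IsBinaryObservable :=
  ⟨by rw [IsHermitian, conjTranspose_kronecker, hb.1.eq, conjTranspose_one],
    by rw [← mul_kronecker_mul, hb.2, Matrix.one_mul, one_kronecker_one]⟩

theorem re_trace_mul_chsh_le {ρ : Matrix ι ι ℂ} (hρ : ρ.PosSemidef) {a b : Fin 2 → Matrix ι ι ℂ}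
    (ha : ∀ x, (a x).IsBinaryObservable) (hb : ∀ y, (b y).IsBinaryObservable)
    (hab : ∀ x y, Commute (a x) (b y)) :
    (ρ * chsh a b).trace.re ≤ 2 * √2 * ρ.trace.re := by
  set P := √2 • a 0 - (b 0 + b 1)
  set Q := √2 • a 1 - (b 0 - b 1)
  have hsos : (2 * √2) • chsh a b = 8 - P * P - Q * Q := by
    rw [sub_sub, chsh_sum_of_squares (fun x ↦ (ha x).2) (fun y ↦ (hb y).2) hab, sub_sub_cancel]
  have hP : 0 ≤ (ρ * (P * P)).trace.re :=
    hρ.re_trace_mul_mul_self_nonneg (((ha 0).1.smul (.all _)).sub ((hb 0).1.add (hb 1).1))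
  have hQ : 0 ≤ (ρ * (Q * Q)).trace.re :=
    hρ.re_trace_mul_mul_self_nonneg (((ha 1).1.smul (.all _)).sub ((hb 0).1.sub (hb 1).1))
  have htr := congrArg (fun X ↦ (ρ * X).trace.re) hsos
  simp only [Matrix.mul_sub, Matrix.mul_smul, trace_sub, trace_smul, trace_mul_ofNat,
    Complex.sub_re, Complex.smul_re, smul_eq_mul, Complex.mul_re, Complex.re_ofNat,
    Complex.im_ofNat, zero_mul, sub_zero] at htr
  have hs : √2 * √2 = 2 := Real.mul_self_sqrt zero_le_two
  refine le_of_mul_le_mul_left ?_ (by positivity : (0 : ℝ) < 2 * √2)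
  calc 2 * √2 * (ρ * chsh a b).trace.re ≤ 8 * ρ.trace.re := by linarith
    _ = 2 * √2 * (2 * √2 * ρ.trace.re) := by linear_combination (-4 * ρ.trace.re) * hs

end Observable

section MaxEntangled

variable {ι : Type*} [Fintype ι] [DecidableEq ι]

noncomputable def maxEntangled (ι : Type*) [Fintype ι] [DecidableEq ι] :
    Matrix (ι × ι) (ι × ι) ℂ :=
  (Fintype.card ι : ℂ)⁻¹ • vecMulVec (fun p ↦ (1 : Matrix ι ι ℂ) p.1 p.2)
    (star fun p ↦ (1 : Matrix ι ι ℂ) p.1 p.2)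

theorem posSemidef_maxEntangled : (maxEntangled ι).PosSemidef :=
  (posSemidef_vecMulVec_self_star _).smul (by positivity)

theorem trace_maxEntangled [Nonempty ι] : (maxEntangled ι).trace = 1 := by
  simp [maxEntangled, dotProduct, Fintype.sum_prod_type, one_apply]

theorem trace_maxEntangled_mul_kronecker (P Q : Matrix ι ι ℂ) :
    (maxEntangled ι * (P ⊗ₖ Q)).trace = (Pᵀ * Q).trace / Fintype.card ι := by
  simp [maxEntangled, trace, mul_apply, Fintype.sum_prod_type, one_apply, vecMulVec_apply,
    div_eq_inv_mul, Finset.mul_sum]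

end MaxEntangled

end Matrix

theorem kron_eq_mul {m n : ℕ} (A : Matrix (Fin m) (Fin m) ℂ) (B : Matrix (Fin n) (Fin n) ℂ) :
    kron A B = (A ⊗ₖ 1) * (1 ⊗ₖ B) :=
  (kronecker_one_mul_one_kronecker A B).symm

theorem bellExpr_eq_re_trace_bellOperator {m n : ℕ}
    (ρ : Matrix (Fin m × Fin n) (Fin m × Fin n) ℂ) (A : Fin 2 → Matrix (Fin m) (Fin m) ℂ)
    (B : Fin 2 → Matrix (Fin n) (Fin n) ℂ) :
    bellExpr ρ A B = (ρ * bellOperator (fun x ↦ A x ⊗ₖ 1) (fun y ↦ 1 ⊗ₖ B y)).trace.re := by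
  simp only [bellExpr, bellOperator, kron_eq_mul, sub_kronecker, kronecker_sub,
    one_kronecker_one, Matrix.mul_add, trace_add, Complex.add_re]

theorem bellExpr_eq_two_add_chsh {m n : ℕ} {ρ : Matrix (Fin m × Fin n) (Fin m × Fin n) ℂ}
    (hρ : ρ.trace = 1) (A : Fin 2 → Matrix (Fin m) (Fin m) ℂ)
    (B : Fin 2 → Matrix (Fin n) (Fin n) ℂ) :
    bellExpr ρ A B = 2 +
      (ρ * chsh (fun x ↦ (2 * A x - 1) ⊗ₖ 1) (fun y ↦ 1 ⊗ₖ (2 * B y - 1))).trace.re / 2 := by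
  have h := congrArg (fun X ↦ (ρ * X).trace.re)
    (two_mul_bellOperator (fun x ↦ A x ⊗ₖ 1) (fun y ↦ 1 ⊗ₖ B y))
  simp only [trace_mul_ofNat_mul, Matrix.mul_add, trace_add, trace_mul_ofNat, hρ,
    Complex.add_re, Complex.mul_re, Complex.re_ofNat, Complex.im_ofNat, zero_mul, sub_zero,
    mul_one] at h
  simp only [bellExpr_eq_re_trace_bellOperator, two_mul_sub_one_kronecker_one,
    one_kronecker_two_mul_sub_one]
  linarith

theorem bellExpr_le_two_add_sqrt_two {m n : ℕ} {ρ : Matrix (Fin m × Fin n) (Fin m × Fin n) ℂ}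
    {A : Fin 2 → Matrix (Fin m) (Fin m) ℂ} {B : Fin 2 → Matrix (Fin n) (Fin n) ℂ}
    (hρ : ρ.PosSemidef) (htr : ρ.trace = 1) (hA : ∀ x, IsProjection (A x))
    (hB : ∀ y, IsProjection (B y)) :
    bellExpr ρ A B ≤ 2 + √2 := by
  have h := re_trace_mul_chsh_le hρ
    (fun x ↦ (isBinaryObservable_two_mul_sub_one (hA x).1 (hA x).2).kronecker_one)
    (fun y ↦ (isBinaryObservable_two_mul_sub_one (hB y).1 (hB y).2).one_kronecker)
    (fun _ _ ↦ commute_kronecker_one_one_kronecker _ _)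
  rw [htr, Complex.one_re, mul_one] at h
  rw [bellExpr_eq_two_add_chsh htr]
  linarith

theorem Matrix.IsBinaryObservable.isProjection_inv_two_smul_one_add {m : ℕ}
    {a : Matrix (Fin m) (Fin m) ℂ} (ha : a.IsBinaryObservable) :
    IsProjection ((2⁻¹ : ℝ) • (1 + a)) := by
  refine ⟨(isHermitian_one.add ha.1).smul (.all _), ?_⟩
  simp only [smul_mul_smul_comm, add_mul, mul_add, ha.2, Matrix.one_mul, Matrix.mul_one]
  module

open Real in
noncomputable def reflectionMatrix (θ : ℝ) : Matrix (Fin 2) (Fin 2) ℂ :=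
  !![(cos θ : ℂ), sin θ; sin θ, -cos θ]

theorem transpose_reflectionMatrix (θ : ℝ) : (reflectionMatrix θ)ᵀ = reflectionMatrix θ := by
  ext i j; fin_cases i <;> fin_cases j <;> rfl

theorem isBinaryObservable_reflectionMatrix (θ : ℝ) : (reflectionMatrix θ).IsBinaryObservable := by
  constructor
  · ext i j
    fin_cases i <;> fin_cases j <;>
      simp [reflectionMatrix, -Complex.ofReal_cos, -Complex.ofReal_sin]
  · rw [reflectionMatrix, mul_fin_two, one_fin_two]
    ext i j
    fin_cases i <;> fin_cases j <;>
      simp [mul_comm, ← sq, Complex.cos_sq_add_sin_sq, Complex.sin_sq_add_cos_sq]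

theorem trace_reflectionMatrix_mul (θ φ : ℝ) :
    (reflectionMatrix θ * reflectionMatrix φ).trace = 2 * Real.cos (θ - φ) := by
  rw [reflectionMatrix, reflectionMatrix, mul_fin_two, trace_fin_two_of]
  push_cast [Real.cos_sub]
  ring

theorem trace_maxEntangled_mul_reflectionMatrix_kronecker (θ φ : ℝ) :
    (maxEntangled (Fin 2) * (reflectionMatrix θ ⊗ₖ reflectionMatrix φ)).trace
      = Real.cos (θ - φ) := by
  rw [trace_maxEntangled_mul_kronecker, transpose_reflectionMatrix, trace_reflectionMatrix_mul,
    Fintype.card_fin]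
  push_cast
  ring

theorem bellExpr_maxEntangled_reflectionMatrix (α β : Fin 2 → ℝ) :
    bellExpr (maxEntangled (Fin 2)) (fun x ↦ (2⁻¹ : ℝ) • (1 + reflectionMatrix (α x)))
      (fun y ↦ (2⁻¹ : ℝ) • (1 + reflectionMatrix (β y)))
      = 2 + (Real.cos (α 0 - β 0) + Real.cos (α 0 - β 1) + Real.cos (α 1 - β 0)
        - Real.cos (α 1 - β 1)) / 2 := by
  rw [bellExpr_eq_two_add_chsh trace_maxEntangled]
  simp only [two_mul_inv_two_smul_one_add_sub_one, chsh, kronecker_one_mul_one_kronecker,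
    Matrix.mul_add, Matrix.mul_sub, trace_add, trace_sub,
    trace_maxEntangled_mul_reflectionMatrix_kronecker, Complex.add_re, Complex.sub_re,
    Complex.ofReal_re]

open Real in
theorem bellExpr_maxEntangled_optimal :
    bellExpr (maxEntangled (Fin 2))
      (fun x ↦ (2⁻¹ : ℝ) • (1 + reflectionMatrix (![0, π / 2] x)))
      (fun y ↦ (2⁻¹ : ℝ) • (1 + reflectionMatrix (![π / 4, -(π / 4)] y))) = 2 + √2 := by
  rw [bellExpr_maxEntangled_reflectionMatrix]
  have h₁ : π / 2 - π / 4 = π / 4 := by ring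
  have h₂ : π / 2 - -(π / 4) = π - π / 4 := by ring
  simp only [cons_val_zero, cons_val_one, cons_val_fin_one, zero_sub, sub_neg_eq_add, zero_add,
    cos_neg, h₁, h₂, cos_pi_sub, cos_pi_div_four]
  ring

/-- Tsirelson's bound in CHSH probability form: there exist a two-qubit state and
projective measurements achieving the value `2 + √2` for the Bell expression
`P(a₁=b₁) + P(a₁=b₂) + P(a₂=b₁) + P(a₂≠b₂)`, and no quantum strategy (any
finite-dimensional state and projective measurements) exceeds `2 + √2`. -/
theorem tsirelson_probability_form :
    (∃ (ρ : Matrix (Fin 2 × Fin 2) (Fin 2 × Fin 2) ℂ)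
       (A : Fin 2 → Matrix (Fin 2) (Fin 2) ℂ) (B : Fin 2 → Matrix (Fin 2) (Fin 2) ℂ),
       ρ.PosSemidef ∧ ρ.trace = 1 ∧ (∀ x, IsProjection (A x)) ∧ (∀ y, IsProjection (B y)) ∧
       bellExpr ρ A B = 2 + Real.sqrt 2) ∧
    (∀ (m n : ℕ) (ρ : Matrix (Fin m × Fin n) (Fin m × Fin n) ℂ)
       (A : Fin 2 → Matrix (Fin m) (Fin m) ℂ) (B : Fin 2 → Matrix (Fin n) (Fin n) ℂ),
       ρ.PosSemidef → ρ.trace = 1 → (∀ x, IsProjection (A x)) → (∀ y, IsProjection (B y)) →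
       bellExpr ρ A B ≤ 2 + Real.sqrt 2) := by
  refine ⟨⟨_, _, _, posSemidef_maxEntangled, trace_maxEntangled, fun _ ↦ ?_, fun _ ↦ ?_,
    bellExpr_maxEntangled_optimal⟩, fun _ _ _ _ _ ↦ bellExpr_le_two_add_sqrt_two⟩ <;>
  exact (isBinaryObservable_reflectionMatrix _).isProjection_inv_two_smul_one_add
end
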